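/- Let k ≥ 0 be an integer and n ≥ 2. Let A_n(m) be defined by A_0 = 1, A_1 = m−1, A_n = (m−1)(A_{n−1} + A_{n−2}). Consider the polynomial U(x) = (−x)^n · A_n(k + 1 − 1/x) · (1 + 4/(k − 1/x)) (cleared of denominators so it is a polynomial in x). Then every real root of U is positive and its smallest positive root equals 1/(k+4). -/
import Mathlib


/-- `A_0 = 1`, `A_1(m) = m − 1`, `A_n(m) = (m−1)(A_{n−1}(m) + A_{n−2}(m))`. -/
def A : ℕ → ℝ → ℝ
  | 0, _ => 1
  | 1, m => m - 1
  | (n + 2), m => (m - 1) * (A (n + 1) m + A n m)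

/-- The function `U(x) = (−x)^n · A_n(k + 1 − 1/x) · (1 + 4/(k − 1/x))`. -/
noncomputable def U (n k : ℕ) (x : ℝ) : ℝ :=
  (-x) ^ n * A n ((k : ℝ) + 1 - 1 / x) * (1 + 4 / ((k : ℝ) - 1 / x))

lemma A_pos (m : ℝ) (hm : 1 < m) : ∀ n, 0 < A n m := by
  have h : ∀ n, 0 < A n m ∧ 0 < A (n + 1) m := by
    intro n
    induction n with
    | zero =>
      constructor
      · simp [A]
      · simp [A]; linarith
    | succ n ih =>
      refine ⟨ih.2, ?_⟩
      rw [show A (n + 2) m = (m - 1) * (A (n + 1) m + A n m) from rfl]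
      nlinarith [ih.1, ih.2]
  exact fun n => (h n).1

lemma A_alt (m : ℝ) (hm : m < -3) :
    ∀ n, 0 < (-1 : ℝ) ^ n * A n m ∧
      2 * ((-1 : ℝ) ^ n * A n m) < (-1 : ℝ) ^ (n + 1) * A (n + 1) m := by
  intro n
  induction n with
  | zero =>
    constructor
    · simp [A]
    · simp [A]; linarith
  | succ n ih =>
    obtain ⟨ha, hab⟩ := ih
    have hb : 0 < (-1 : ℝ) ^ (n + 1) * A (n + 1) m := by nlinarith
    refine ⟨hb, ?_⟩
    have h2 : A (n + 1 + 1) m = (m - 1) * (A (n + 1) m + A n m) := rfl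
    rw [h2]
    simp only [pow_succ] at hab hb ⊢
    nlinarith [ha, hab, hb,
      mul_pos (show (0 : ℝ) < -3 - m by linarith)
        (show (0 : ℝ) < (-1 : ℝ) ^ n * -1 * A (n + 1) m - (-1 : ℝ) ^ n * A n m by
          linarith)]

lemma A_ne_of_lt (m : ℝ) (hm : m < -3) (n : ℕ) : A n m ≠ 0 := by
  intro h
  have := (A_alt m hm n).1
  rw [h, mul_zero] at this
  exact lt_irrefl 0 this

/-- For integers `k ≥ 0` and `n ≥ 2`: every (nonzero) real root of
`U(x) = (−x)^n · A_n(k + 1 − 1/x) · (1 + 4/(k − 1/x))` is positive, and its smallest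
positive root equals `1/(k+4)`. -/
theorem U_roots_pos_and_min (n k : ℕ) (hn : 2 ≤ n) :
    (∀ x : ℝ, x ≠ 0 → U n k x = 0 → 0 < x) ∧
      U n k (1 / ((k : ℝ) + 4)) = 0 ∧
      ∀ x : ℝ, 0 < x → x < 1 / ((k : ℝ) + 4) → U n k x ≠ 0 := by
  have hk : (0 : ℝ) ≤ (k : ℝ) := Nat.cast_nonneg k
  refine ⟨?_, ?_, ?_⟩
  · -- every nonzero root is positive
    intro x hx0 hU
    by_contra hpos
    push_neg at hpos
    have hx : x < 0 := lt_of_le_of_ne hpos hx0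
    have hinv : 1 / x < 0 := one_div_neg.mpr hx
    have h1 : (0 : ℝ) < (-x) ^ n := pow_pos (by linarith) n
    have h2 : 0 < A n ((k : ℝ) + 1 - 1 / x) := A_pos _ (by linarith) n
    have ht : 0 < (k : ℝ) - 1 / x := by linarith
    have h3 : 0 < 1 + 4 / ((k : ℝ) - 1 / x) := by positivity
    have : 0 < U n k x := by unfold U; positivity
    rw [hU] at this
    exact lt_irrefl 0 this
  · -- U(1/(k+4)) = 0
    have hk4 : (0 : ℝ) < (k : ℝ) + 4 := by positivity
    unfold U
    rw [one_div_one_div]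
    have h : (k : ℝ) - ((k : ℝ) + 4) = -4 := by ring
    rw [h]
    norm_num
  · -- no positive root smaller than 1/(k+4)
    intro x hx hlt hU
    have hk4 : (0 : ℝ) < (k : ℝ) + 4 := by positivity
    have hx4 : (k : ℝ) + 4 < 1 / x := by
      rw [lt_div_iff₀ hx]
      have := (lt_div_iff₀ hk4).mp hlt
      linarith [this]
    have hm : (k : ℝ) + 1 - 1 / x < -3 := by linarith
    have ht : (k : ℝ) - 1 / x < -4 := by linarith
    have ht0 : (k : ℝ) - 1 / x < 0 := by linarith
    have h3 : 0 < 1 + 4 / ((k : ℝ) - 1 / x) := by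
      have : (-1 : ℝ) < 4 / ((k : ℝ) - 1 / x) :=
        (lt_div_iff_of_neg ht0).mpr (by linarith)
      linarith
    have h2 : 0 < (-1 : ℝ) ^ n * A n ((k : ℝ) + 1 - 1 / x) := (A_alt _ hm n).1
    have h1 : 0 < x ^ n := pow_pos hx n
    have hUpos : 0 < U n k x := by
      unfold U
      have : (-x) ^ n = (-1 : ℝ) ^ n * x ^ n := by rw [neg_pow]
      rw [this]
      calc (0 : ℝ) < x ^ n * ((-1 : ℝ) ^ n * A n ((k : ℝ) + 1 - 1 / x)) *
            (1 + 4 / ((k : ℝ) - 1 / x)) := by positivity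
        _ = (-1 : ℝ) ^ n * x ^ n * A n ((k : ℝ) + 1 - 1 / x) *
            (1 + 4 / ((k : ℝ) - 1 / x)) := by ring
    rw [hU] at hUpos
    exact lt_irrefl 0 hUpos
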